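/- Let Ψ ∈ ℂ² ⊗ ℂ² ⊗ ℂ² be nonzero. Then Ψ is SLOCC-equivalent to e₁⊗e₁⊗e₁ + e₂⊗e₁⊗e₂ (i.e. the second qubit factorizes and the remaining state of qubits 1 and 3 is entangled) if and only if rank C⁽²⁾(Ψ) = 1 and rank C⁽¹⁾(Ψ) = rank C⁽³⁾(Ψ) = 2. -/

import Mathlib

open scoped TensorProduct

/-- The standard basis vectors of `ℂ²` (`e 0 = e₁`, `e 1 = e₂`). -/
noncomputable def e (i : Fin 2) : Fin 2 → ℂ := Pi.single i 1

/-- The space of three qubits, `ℂ² ⊗ ℂ² ⊗ ℂ²`. -/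
abbrev Qubit3 := (Fin 2 → ℂ) ⊗[ℂ] ((Fin 2 → ℂ) ⊗[ℂ] (Fin 2 → ℂ))

/-- The coefficients `c_{i₁i₂i₃}` of a three-qubit state in the standard product basis. -/
noncomputable def coeff3 (Ψ : Qubit3) (i₁ i₂ i₃ : Fin 2) : ℂ :=
  (((Pi.basisFun ℂ (Fin 2)).tensorProduct
      ((Pi.basisFun ℂ (Fin 2)).tensorProduct (Pi.basisFun ℂ (Fin 2)))).repr Ψ) (i₁, i₂, i₃)

/-- The coefficient matrix `C⁽¹⁾(Ψ)` for the partition 1|23. -/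
noncomputable def Cmat1 (Ψ : Qubit3) : Matrix (Fin 2) (Fin 2 × Fin 2) ℂ :=
  Matrix.of fun i p => coeff3 Ψ i p.1 p.2

/-- The coefficient matrix `C⁽²⁾(Ψ)` for the partition 2|13. -/
noncomputable def Cmat2 (Ψ : Qubit3) : Matrix (Fin 2) (Fin 2 × Fin 2) ℂ :=
  Matrix.of fun i p => coeff3 Ψ p.1 i p.2

/-- The coefficient matrix `C⁽³⁾(Ψ)` for the partition 3|12. -/
noncomputable def Cmat3 (Ψ : Qubit3) : Matrix (Fin 2) (Fin 2 × Fin 2) ℂ :=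
  Matrix.of fun i p => coeff3 Ψ p.1 p.2 i

/-- The action of a triple of linear maps on the three-qubit space. -/
noncomputable def map3 (F1 F2 F3 : (Fin 2 → ℂ) →ₗ[ℂ] (Fin 2 → ℂ)) :
    Qubit3 →ₗ[ℂ] Qubit3 :=
  TensorProduct.map F1 (TensorProduct.map F2 F3)

section Auxiliary

open Matrix
open scoped Kronecker

/-- The product basis of the three-qubit space. -/
noncomputable abbrev B3 : Module.Basis (Fin 2 × Fin 2 × Fin 2) ℂ Qubit3 :=
  (Pi.basisFun ℂ (Fin 2)).tensorProduct
      ((Pi.basisFun ℂ (Fin 2)).tensorProduct (Pi.basisFun ℂ (Fin 2)))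

/-- The target state. -/
noncomputable def Phi0 : Qubit3 := e 0 ⊗ₜ[ℂ] (e 0 ⊗ₜ[ℂ] e 0) + e 1 ⊗ₜ[ℂ] (e 0 ⊗ₜ[ℂ] e 1)

lemma ext_coeff3 {Ψ Φ : Qubit3} (h : ∀ i j k, coeff3 Ψ i j k = coeff3 Φ i j k) : Ψ = Φ := by
  apply B3.repr.injective
  ext p
  exact h p.1 p.2.1 p.2.2

lemma coeff3_map3 (F1 F2 F3 : (Fin 2 → ℂ) →ₗ[ℂ] (Fin 2 → ℂ)) (Ψ : Qubit3) (i j k : Fin 2) :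
    coeff3 (map3 F1 F2 F3 Ψ) i j k
      = ∑ a, ∑ b, ∑ c, LinearMap.toMatrix' F1 i a * LinearMap.toMatrix' F2 j b
          * LinearMap.toMatrix' F3 k c * coeff3 Ψ a b c := by
  have h1 : LinearMap.toMatrix B3 B3 (map3 F1 F2 F3)
      = Matrix.kroneckerMap (· * ·) (LinearMap.toMatrix' F1)
          (Matrix.kroneckerMap (· * ·) (LinearMap.toMatrix' F2) (LinearMap.toMatrix' F3)) := by
    rw [map3]
    rw [TensorProduct.toMatrix_map, TensorProduct.toMatrix_map]
    simp [LinearMap.toMatrix_eq_toMatrix']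
  have h2 := LinearMap.toMatrix_mulVec_repr B3 B3 (map3 F1 F2 F3) Ψ
  have : coeff3 (map3 F1 F2 F3 Ψ) i j k
      = (LinearMap.toMatrix B3 B3 (map3 F1 F2 F3) *ᵥ (B3.repr Ψ)) (i, j, k) := by
    rw [h2]; rfl
  rw [this, h1]
  simp only [Matrix.mulVec, dotProduct, Fintype.sum_prod_type, Matrix.kroneckerMap_apply]
  refine Finset.sum_congr rfl fun a _ => Finset.sum_congr rfl fun b _ =>
    Finset.sum_congr rfl fun c _ => ?_
  show _ * (B3.repr Ψ) (a, b, c) = _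
  rw [show (B3.repr Ψ) (a, b, c) = coeff3 Ψ a b c from rfl]
  ring

lemma cmat1_map3 (F1 F2 F3 : (Fin 2 → ℂ) →ₗ[ℂ] (Fin 2 → ℂ)) (Ψ : Qubit3) :
    Cmat1 (map3 F1 F2 F3 Ψ) = LinearMap.toMatrix' F1 * Cmat1 Ψ *
      (Matrix.kroneckerMap (· * ·) (LinearMap.toMatrix' F2) (LinearMap.toMatrix' F3))ᵀ := by
  ext i ⟨j, k⟩
  simp only [Cmat1, Matrix.of_apply, coeff3_map3, Matrix.mul_apply, Fintype.sum_prod_type,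
    Matrix.transpose_apply, Matrix.kroneckerMap_apply, Fin.sum_univ_two, Finset.sum_mul,
    Finset.mul_sum]
  ring

lemma cmat2_map3 (F1 F2 F3 : (Fin 2 → ℂ) →ₗ[ℂ] (Fin 2 → ℂ)) (Ψ : Qubit3) :
    Cmat2 (map3 F1 F2 F3 Ψ) = LinearMap.toMatrix' F2 * Cmat2 Ψ *
      (Matrix.kroneckerMap (· * ·) (LinearMap.toMatrix' F1) (LinearMap.toMatrix' F3))ᵀ := by
  ext i ⟨j, k⟩
  simp only [Cmat2, Matrix.of_apply, coeff3_map3, Matrix.mul_apply, Fintype.sum_prod_type,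
    Matrix.transpose_apply, Matrix.kroneckerMap_apply, Fin.sum_univ_two, Finset.sum_mul,
    Finset.mul_sum]
  ring

lemma cmat3_map3 (F1 F2 F3 : (Fin 2 → ℂ) →ₗ[ℂ] (Fin 2 → ℂ)) (Ψ : Qubit3) :
    Cmat3 (map3 F1 F2 F3 Ψ) = LinearMap.toMatrix' F3 * Cmat3 Ψ *
      (Matrix.kroneckerMap (· * ·) (LinearMap.toMatrix' F1) (LinearMap.toMatrix' F2))ᵀ := by
  ext i ⟨j, k⟩
  simp only [Cmat3, Matrix.of_apply, coeff3_map3, Matrix.mul_apply, Fintype.sum_prod_type,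
    Matrix.transpose_apply, Matrix.kroneckerMap_apply, Fin.sum_univ_two, Finset.sum_mul,
    Finset.mul_sum]
  ring

lemma rank_conj (A : Matrix (Fin 2) (Fin 2) ℂ) (N : Matrix (Fin 2 × Fin 2) (Fin 2 × Fin 2) ℂ)
    (B : Matrix (Fin 2) (Fin 2 × Fin 2) ℂ) (hA : IsUnit A.det) (hN : IsUnit N.det) :
    (A * B * N).rank = B.rank := by
  rw [Matrix.rank_mul_eq_left_of_isUnit_det _ _ hN, Matrix.rank_mul_eq_right_of_isUnit_det _ _ hA]

lemma isUnit_kron_transpose (M2 M3 : Matrix (Fin 2) (Fin 2) ℂ) (h2 : IsUnit M2.det)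
    (h3 : IsUnit M3.det) : IsUnit (Matrix.kroneckerMap (· * ·) M2 M3)ᵀ.det := by
  rw [Matrix.det_transpose]
  rw [show Matrix.kroneckerMap (· * ·) M2 M3 = M2 ⊗ₖ M3 from rfl, Matrix.det_kronecker]
  exact (h2.pow _).mul (h3.pow _)

lemma isUnit_toMatrix'_det (F : (Fin 2 → ℂ) ≃ₗ[ℂ] (Fin 2 → ℂ)) :
    IsUnit (LinearMap.toMatrix' F.toLinearMap).det := by
  rw [← LinearMap.toMatrix_eq_toMatrix']
  exact LinearEquiv.isUnit_det F _ _

/-- The ranks of the three coefficient matrices are invariant under invertible `map3`. -/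
lemma rank_cmats_map3 (F1 F2 F3 : (Fin 2 → ℂ) ≃ₗ[ℂ] (Fin 2 → ℂ)) (Ψ : Qubit3) :
    (Cmat1 (map3 F1.toLinearMap F2.toLinearMap F3.toLinearMap Ψ)).rank = (Cmat1 Ψ).rank ∧
    (Cmat2 (map3 F1.toLinearMap F2.toLinearMap F3.toLinearMap Ψ)).rank = (Cmat2 Ψ).rank ∧
    (Cmat3 (map3 F1.toLinearMap F2.toLinearMap F3.toLinearMap Ψ)).rank = (Cmat3 Ψ).rank := by
  refine ⟨?_, ?_, ?_⟩
  · rw [cmat1_map3]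
    exact rank_conj _ _ _ (isUnit_toMatrix'_det F1)
      (isUnit_kron_transpose _ _ (isUnit_toMatrix'_det F2) (isUnit_toMatrix'_det F3))
  · rw [cmat2_map3]
    exact rank_conj _ _ _ (isUnit_toMatrix'_det F2)
      (isUnit_kron_transpose _ _ (isUnit_toMatrix'_det F1) (isUnit_toMatrix'_det F3))
  · rw [cmat3_map3]
    exact rank_conj _ _ _ (isUnit_toMatrix'_det F3)
      (isUnit_kron_transpose _ _ (isUnit_toMatrix'_det F1) (isUnit_toMatrix'_det F2))

lemma matrix_eq_zero_of_rank_eq_zero {m n : Type*} [Fintype n] [Fintype m] [DecidableEq n]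
    (M : Matrix m n ℂ) (h : M.rank = 0) : M = 0 := by
  have hb : LinearMap.range M.mulVecLin = ⊥ := by
    rw [Matrix.rank] at h
    exact Submodule.finrank_eq_zero.mp h
  ext i j
  have h2 : M.mulVecLin (Pi.single j 1) = 0 := by
    have hmem : M.mulVecLin (Pi.single j 1) ∈ LinearMap.range M.mulVecLin :=
      LinearMap.mem_range_self _ _
    rw [hb] at hmem
    simpa using hmem
  have := congrFun h2 i
  simpa [Matrix.mulVecLin_apply] using this

lemma rank_le_one_of_factor {m n : Type*} [Fintype n] [Fintype m]
    (M : Matrix m n ℂ) (v : m → ℂ) (w : n → ℂ) (h : ∀ i j, M i j = v i * w j) :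
    M.rank ≤ 1 := by
  have : M = (Matrix.of fun i (_ : Fin 1) => v i) * (Matrix.of fun (_ : Fin 1) j => w j) := by
    ext i j; simp [Matrix.mul_apply, h]
  rw [this]
  exact (Matrix.rank_mul_le_left _ _).trans ((Matrix.rank_le_card_width _).trans (by simp))

lemma rank_eq_two_of_right_inverse (C : Matrix (Fin 2) (Fin 2 × Fin 2) ℂ)
    (P : Matrix (Fin 2 × Fin 2) (Fin 2) ℂ) (h : C * P = 1) : C.rank = 2 := by
  refine le_antisymm ((Matrix.rank_le_card_height C).trans (by simp)) ?_
  calc (2 : ℕ) = (C * P).rank := by rw [h, Matrix.rank_one]; simp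
    _ ≤ C.rank := Matrix.rank_mul_le_left _ _

lemma isUnit_det_of_rank_two (m : Matrix (Fin 2) (Fin 2) ℂ) (h : m.rank = 2) :
    IsUnit m.det := by
  rw [← Matrix.isUnit_iff_isUnit_det, ← Matrix.mulVec_surjective_iff_isUnit]
  have htop : LinearMap.range m.mulVecLin = ⊤ := by
    apply Submodule.eq_top_of_finrank_eq
    rw [← Matrix.rank, h]
    simp [Module.finrank_pi]
  intro v
  have : v ∈ LinearMap.range m.mulVecLin := htop ▸ Submodule.mem_top
  obtain ⟨x, hx⟩ := this
  exact ⟨x, hx⟩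

lemma rank_one_factor {n : Type*} [Fintype n] (M : Matrix (Fin 2) n ℂ) (h : M.rank = 1) :
    ∃ (v : Fin 2 → ℂ) (w : n → ℂ), v ≠ 0 ∧ (∀ i j, M i j = v i * w j) := by
  have hs : Module.finrank ℂ (Submodule.span ℂ (Set.range M)) = 1 := by
    exact (Matrix.rank_eq_finrank_span_row M).symm.trans h
  rw [finrank_eq_one_iff'] at hs
  obtain ⟨⟨w, hw⟩, hw0, hspan⟩ := hs
  have hrow : ∀ i : Fin 2, ∃ c : ℂ, ∀ j, c * w j = M i j := by
    intro i
    obtain ⟨c, hc⟩ := hspan ⟨M i, Submodule.subset_span ⟨i, rfl⟩⟩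
    exact ⟨c, fun j => congrFun (congrArg Subtype.val hc) j⟩
  choose v hv using hrow
  refine ⟨v, w, ?_, fun i j => (hv i j).symm⟩
  intro hv0
  have : M = 0 := by
    ext i j
    rw [← hv i j, show v i = 0 from congrFun hv0 i, zero_mul]
    simp
  rw [this, Matrix.rank_zero] at h
  exact one_ne_zero h.symm

lemma coeff3_tmul (x y z : Fin 2 → ℂ) (i j k : Fin 2) :
    coeff3 (x ⊗ₜ[ℂ] (y ⊗ₜ[ℂ] z)) i j k = x i * (y j * z k) := by
  simp [coeff3, Module.Basis.tensorProduct_repr_tmul_apply]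
  ring

lemma coeff3_add (X Y : Qubit3) (i j k : Fin 2) :
    coeff3 (X + Y) i j k = coeff3 X i j k + coeff3 Y i j k := by
  unfold coeff3; rw [LinearEquiv.map_add]; rfl

lemma coeff3_Phi0 (i j k : Fin 2) :
    coeff3 Phi0 i j k = if j = 0 ∧ i = k then 1 else 0 := by
  have : coeff3 Phi0 i j k = coeff3 (e 0 ⊗ₜ[ℂ] (e 0 ⊗ₜ[ℂ] e 0)) i j k
      + coeff3 (e 1 ⊗ₜ[ℂ] (e 0 ⊗ₜ[ℂ] e 1)) i j k := coeff3_add _ _ _ _ _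
  rw [this, coeff3_tmul, coeff3_tmul]
  simp only [e, Pi.single_apply]
  fin_cases i <;> fin_cases j <;> fin_cases k <;> norm_num

lemma rank_Cmat1_Phi0 : (Cmat1 Phi0).rank = 2 := by
  apply rank_eq_two_of_right_inverse _
    (Matrix.of fun p i' => if p.1 = 0 ∧ p.2 = i' then 1 else 0)
  ext i i'
  simp [Matrix.mul_apply, Cmat1, coeff3_Phi0, Fintype.sum_prod_type, Fin.sum_univ_two,
    Matrix.one_apply]
  fin_cases i <;> fin_cases i' <;> norm_num

lemma rank_Cmat3_Phi0 : (Cmat3 Phi0).rank = 2 := by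
  apply rank_eq_two_of_right_inverse _
    (Matrix.of fun p k' => if p.2 = 0 ∧ p.1 = k' then 1 else 0)
  ext k k'
  simp [Matrix.mul_apply, Cmat3, coeff3_Phi0, Fintype.sum_prod_type, Fin.sum_univ_two,
    Matrix.one_apply]
  fin_cases k <;> fin_cases k' <;> norm_num

lemma rank_Cmat2_Phi0 : (Cmat2 Phi0).rank = 1 := by
  refine le_antisymm ?_ ?_
  · apply rank_le_one_of_factor _ (fun j => if j = 0 then 1 else 0)
      (fun p => if p.1 = p.2 then 1 else 0)
    intro j p
    simp [Cmat2, coeff3_Phi0]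
    fin_cases j <;> rcases p with ⟨a, c⟩ <;> fin_cases a <;> fin_cases c <;> norm_num
  · rw [Nat.one_le_iff_ne_zero]
    intro h0
    have := matrix_eq_zero_of_rank_eq_zero _ h0
    have h1 : Cmat2 Phi0 0 (0, 0) = 1 := by simp [Cmat2, coeff3_Phi0]
    rw [this] at h1
    simp at h1

end Auxiliary

theorem class_0_2_Psi13_iff (Ψ : Qubit3) (hΨ : Ψ ≠ 0) :
    (∃ F1 F2 F3 : (Fin 2 → ℂ) ≃ₗ[ℂ] (Fin 2 → ℂ),
        map3 F1.toLinearMap F2.toLinearMap F3.toLinearMap Ψ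
          = e 0 ⊗ₜ[ℂ] (e 0 ⊗ₜ[ℂ] e 0) + e 1 ⊗ₜ[ℂ] (e 0 ⊗ₜ[ℂ] e 1)) ↔
      (Cmat2 Ψ).rank = 1 ∧ (Cmat1 Ψ).rank = 2 ∧ (Cmat3 Ψ).rank = 2 := by
  constructor
  · rintro ⟨F1, F2, F3, hmap⟩
    have hmap' : map3 F1.toLinearMap F2.toLinearMap F3.toLinearMap Ψ = Phi0 := hmap
    obtain ⟨hr1, hr2, hr3⟩ := rank_cmats_map3 F1 F2 F3 Ψ
    rw [hmap'] at hr1 hr2 hr3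
    exact ⟨by rw [← hr2, rank_Cmat2_Phi0], by rw [← hr1, rank_Cmat1_Phi0],
      by rw [← hr3, rank_Cmat3_Phi0]⟩
  · rintro ⟨h2, h1, h3⟩
    obtain ⟨v, w, hv, hfac⟩ := rank_one_factor (Cmat2 Ψ) h2
    set m : Matrix (Fin 2) (Fin 2) ℂ := Matrix.of fun a c => w (a, c) with hm
    have hco : ∀ a b c, coeff3 Ψ a b c = v b * m a c := fun a b c => hfac b (a, c)
    obtain ⟨j₀, hj₀⟩ := Function.ne_iff.mp hv
    have hj₀' : v j₀ ≠ 0 := by simpa using hj₀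
    have hm2 : m.rank = 2 := by
      refine le_antisymm ((Matrix.rank_le_card_width m).trans (by simp)) ?_
      have hfac2 : Cmat1 Ψ
          = m * (Matrix.of fun k' (p : Fin 2 × Fin 2) => if k' = p.2 then v p.1 else 0) := by
        ext i ⟨j, k⟩
        simp only [Cmat1, Matrix.of_apply, Matrix.mul_apply, hco, Fin.sum_univ_two]
        fin_cases k <;> simp <;> ring
      calc 2 = (Cmat1 Ψ).rank := h1.symm
        _ ≤ m.rank := by rw [hfac2]; exact Matrix.rank_mul_le_left _ _
    have hdet : IsUnit m.det := isUnit_det_of_rank_two m hm2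
    have hdet' : IsUnit m⁻¹.det := Matrix.isUnit_nonsing_inv_det m hdet
    set A2 : Matrix (Fin 2) (Fin 2) ℂ := Matrix.of fun r s =>
      if r = 0 then (if s = j₀ then (v j₀)⁻¹ else 0)
      else (if s = 0 then -(v 1) else v 0) with hA2def
    have hA2det : A2.det = 1 := by
      rw [Matrix.det_fin_two]
      fin_cases j₀ <;> simp [A2, Matrix.of_apply] <;> exact inv_mul_cancel₀ hj₀'
    have hA2v : ∀ j : Fin 2, A2 j 0 * v 0 + A2 j 1 * v 1 = if j = 0 then 1 else 0 := by
      intro j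
      fin_cases j
      · fin_cases j₀ <;> simp [A2, Matrix.of_apply] <;> exact inv_mul_cancel₀ hj₀'
      · simp [A2, Matrix.of_apply]
        ring
    have hinv : m⁻¹ * m = 1 := Matrix.nonsing_inv_mul m hdet
    refine ⟨Matrix.toLinearEquiv' m⁻¹ (m⁻¹.invertibleOfIsUnitDet hdet'),
      Matrix.toLinearEquiv' A2 (A2.invertibleOfIsUnitDet (by rw [hA2det]; exact isUnit_one)),
      LinearEquiv.refl ℂ (Fin 2 → ℂ), ?_⟩
    have hM1 : LinearMap.toMatrix'
        (Matrix.toLinearEquiv' m⁻¹ (m⁻¹.invertibleOfIsUnitDet hdet')).toLinearMap = m⁻¹ := by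
      have h := Matrix.toLinearEquiv'_apply m⁻¹ (m⁻¹.invertibleOfIsUnitDet hdet')
      rw [show (Matrix.toLinearEquiv' m⁻¹ (m⁻¹.invertibleOfIsUnitDet hdet')).toLinearMap
        = Matrix.toLin' m⁻¹ from h]
      exact LinearMap.toMatrix'_toLin' _
    have hM2 : LinearMap.toMatrix'
        (Matrix.toLinearEquiv' A2
          (A2.invertibleOfIsUnitDet (by rw [hA2det]; exact isUnit_one))).toLinearMap = A2 := by
      have h := Matrix.toLinearEquiv'_apply A2
        (A2.invertibleOfIsUnitDet (by rw [hA2det]; exact isUnit_one))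
      rw [show (Matrix.toLinearEquiv' A2
        (A2.invertibleOfIsUnitDet (by rw [hA2det]; exact isUnit_one))).toLinearMap
        = Matrix.toLin' A2 from h]
      exact LinearMap.toMatrix'_toLin' _
    have hM3 : LinearMap.toMatrix' (LinearEquiv.refl ℂ (Fin 2 → ℂ)).toLinearMap
        = (1 : Matrix (Fin 2) (Fin 2) ℂ) := by
      rw [show (LinearEquiv.refl ℂ (Fin 2 → ℂ)).toLinearMap = LinearMap.id from rfl]
      exact LinearMap.toMatrix'_id
    apply ext_coeff3
    intro i j k
    rw [coeff3_map3, hM1, hM2, hM3]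
    have key : (∑ a, ∑ b, ∑ c, m⁻¹ i a * A2 j b * (1 : Matrix (Fin 2) (Fin 2) ℂ) k c
          * coeff3 Ψ a b c)
        = (∑ b, A2 j b * v b) * (∑ a, ∑ c, m⁻¹ i a * m a c
            * (1 : Matrix (Fin 2) (Fin 2) ℂ) k c) := by
      simp only [hco, Fin.sum_univ_two, Finset.mul_sum, Finset.sum_mul]
      ring
    rw [key]
    have hsum2 : (∑ a, ∑ c, m⁻¹ i a * m a c * (1 : Matrix (Fin 2) (Fin 2) ℂ) k c)
        = (m⁻¹ * m) i k := by
      fin_cases k <;> simp [Matrix.mul_apply, Fin.sum_univ_two, Matrix.one_apply] <;> ring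
    rw [hsum2, hinv]
    have hb : (∑ b, A2 j b * v b) = if j = 0 then 1 else 0 := by
      rw [Fin.sum_univ_two]; exact hA2v j
    rw [hb, Matrix.one_apply]
    rw [show (e 0 ⊗ₜ[ℂ] (e 0 ⊗ₜ[ℂ] e 0) + e 1 ⊗ₜ[ℂ] (e 0 ⊗ₜ[ℂ] e 1)) = Phi0 from rfl, coeff3_Phi0]
    by_cases hj : j = 0 <;> by_cases hik : i = k <;> simp [hj, hik]
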